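/- arXiv:2007.05918 — 3 statements merged into one kernel-verified Lean document; each statement's English description precedes it below -/
import Mathlib

section
/- Generalized Thomson principle: for disjoint nonempty subsets A, B of a finite state space of a reversible irreducible Markov chain, and any nontrivial flow ψ, Cap(A,B) ≥ (Σ_η h_{A,B}(η)·(div ψ)(η))² / ‖ψ‖², where h_{A,B}(η) = P_η[τ_A < τ_B] is the equilibrium potential, Cap(A,B) = D(h_{A,B}) is the capacity, and (div ψ)(η) = Σ_ζ ψ(η,ζ). -/
/-!
Summing by parts, antisymmetry of `ψ` turns `∑ η, h η * (div ψ) η` into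
`-(1/2) * ∑ η ζ, ψ η ζ * (h ζ - h η)`. Cauchy–Schwarz with edge weights `μ η * q η ζ` bounds the
square of this by `D(h) * ‖ψ‖²`, and `Cap(A,B) = D(h)`.
-/

open Finset

theorem Finset.sq_sum_mul_le_sum_mul_sq_mul_sum_div {ι : Type*} (s : Finset ι) {w x y : ι → ℝ}
    (hw : ∀ i ∈ s, 0 ≤ w i) (hy : ∀ i ∈ s, y i ≠ 0 → 0 < w i) :
    (∑ i ∈ s, y i * x i) ^ 2
      ≤ (∑ i ∈ s, w i * x i ^ 2) * ∑ i ∈ s, if 0 < w i then y i ^ 2 / w i else 0 := by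
  refine sum_sq_le_sum_mul_sum_of_sq_le_mul s (fun i hi => mul_nonneg (hw i hi) (sq_nonneg _))
    (fun i hi => by split_ifs <;> positivity) (fun i hi => le_of_eq ?_)
  by_cases hwi : 0 < w i
  · rw [if_pos hwi]
    field_simp
  · have : y i = 0 := not_imp_comm.mp (hy i hi) hwi
    simp [this]

namespace MarkovChain

noncomputable section

variable {H : Type*} [Fintype H]

def dirichletForm (μ : H → ℝ) (q : H → H → ℝ) (f : H → ℝ) : ℝ :=
  (1/2) * ∑ η, ∑ ζ, μ η * q η ζ * (f ζ - f η) ^ 2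

def flowNormSq (μ : H → ℝ) (q : H → H → ℝ) (ψ : H → H → ℝ) : ℝ :=
  (1/2) * ∑ η, ∑ ζ, if 0 < q η ζ then ψ η ζ ^ 2 / (μ η * q η ζ) else 0

def divergence (ψ : H → H → ℝ) (η : H) : ℝ := ∑ ζ, ψ η ζ

theorem dirichletForm_nonneg {μ : H → ℝ} {q : H → H → ℝ} (hμ : ∀ η, 0 ≤ μ η)
    (hq : ∀ η ζ, 0 ≤ q η ζ) (f : H → ℝ) : 0 ≤ dirichletForm μ q f := by
  unfold dirichletForm
  exact mul_nonneg (by norm_num) (sum_nonneg fun η _ => sum_nonneg fun ζ _ =>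
    mul_nonneg (mul_nonneg (hμ η) (hq η ζ)) (sq_nonneg _))

theorem flowNormSq_nonneg {μ : H → ℝ} (hμ : ∀ η, 0 ≤ μ η) (q : H → H → ℝ) (ψ : H → H → ℝ) :
    0 ≤ flowNormSq μ q ψ := by
  unfold flowNormSq
  refine mul_nonneg (by norm_num) (sum_nonneg fun η _ => sum_nonneg fun ζ _ => ?_)
  split_ifs with hq
  · have := hμ η; positivity
  · rfl

theorem sum_mul_divergence_eq {ψ : H → H → ℝ} (hanti : ∀ η ζ, ψ η ζ = -ψ ζ η) (f : H → ℝ) :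
    ∑ η, f η * divergence ψ η = -(1/2) * ∑ η, ∑ ζ, ψ η ζ * (f ζ - f η) := by
  have hswap : ∑ η, ∑ ζ, ψ η ζ * f ζ = -∑ η, ∑ ζ, ψ η ζ * f η := by
    rw [sum_comm, ← sum_neg_distrib]
    refine sum_congr rfl fun η _ => ?_
    rw [← sum_neg_distrib]
    exact sum_congr rfl fun ζ _ => by rw [hanti ζ η, neg_mul]
  have hdiv : ∑ η, f η * divergence ψ η = ∑ η, ∑ ζ, ψ η ζ * f η := by
    simp only [divergence, mul_sum, mul_comm (f _) (ψ _ _)]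
  simp only [hdiv, mul_sub, sum_sub_distrib, hswap]
  ring

theorem sq_sum_mul_divergence_le {μ : H → ℝ} {q : H → H → ℝ} {ψ : H → H → ℝ}
    (hμ : ∀ η, 0 < μ η) (hq : ∀ η ζ, 0 ≤ q η ζ) (hanti : ∀ η ζ, ψ η ζ = -ψ ζ η)
    (hψ : ∀ η ζ, ψ η ζ ≠ 0 → 0 < q η ζ) (f : H → ℝ) :
    (∑ η, f η * divergence ψ η) ^ 2 ≤ dirichletForm μ q f * flowNormSq μ q ψ := by
  have hcs := sq_sum_mul_le_sum_mul_sq_mul_sum_div (univ : Finset (H × H))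
    (w := fun p => μ p.1 * q p.1 p.2) (x := fun p => f p.2 - f p.1) (y := fun p => ψ p.1 p.2)
    (fun p _ => mul_nonneg (hμ p.1).le (hq p.1 p.2))
    (fun p _ hp => mul_pos (hμ p.1) (hψ p.1 p.2 hp))
  simp only [Fintype.sum_prod_type, mul_pos_iff_of_pos_left (hμ _)] at hcs
  rw [sum_mul_divergence_eq hanti, dirichletForm, flowNormSq]
  nlinarith [hcs]

end

end MarkovChain

theorem generalized_thomson_principle_general
    {H : Type*} [Fintype H]
    (q : H → H → ℝ) (μ : H → ℝ) (ψ : H → H → ℝ) (h : H → ℝ)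
    (hq0 : ∀ η ζ, 0 ≤ q η ζ)
    (hμ : ∀ η, 0 < μ η)
    -- `ψ` is a nontrivial flow:
    (hanti : ∀ η ζ, ψ η ζ = - ψ ζ η)
    (hcomp : ∀ η ζ, ψ η ζ ≠ 0 → 0 < q η ζ) :
    (1/2) * ∑ η, ∑ ζ, μ η * q η ζ * (h ζ - h η)^2
      ≥ (∑ η, h η * (∑ ζ, ψ η ζ))^2
        / ((1/2) * ∑ η, ∑ ζ, (if 0 < q η ζ then ψ η ζ ^ 2 / (μ η * q η ζ) else 0)) :=
  div_le_of_le_mul₀ (MarkovChain.flowNormSq_nonneg (fun η => (hμ η).le) q ψ)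
    (MarkovChain.dirichletForm_nonneg (fun η => (hμ η).le) hq0 h)
    (MarkovChain.sq_sum_mul_divergence_le hμ hq0 hanti hcomp h)

/-- Generalized Thomson principle. For disjoint nonempty subsets `A`, `B` of
the finite state space of a reversible irreducible Markov chain and any nontrivial flow `ψ`,
`Cap(A,B) ≥ (Σ_η h_{A,B}(η)·(div ψ)(η))² / ‖ψ‖²`, where `h = h_{A,B}` is the equilibrium
potential (equal to 1 on `A`, 0 on `B`, harmonic elsewhere) and `Cap(A,B) = D(h)`. -/
theorem generalized_thomson_principle
    {H : Type*} [Fintype H] [DecidableEq H]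
    (q : H → H → ℝ) (μ : H → ℝ) (ψ : H → H → ℝ) (h : H → ℝ)
    (A B : Finset H)
    (hq0 : ∀ η ζ, 0 ≤ q η ζ) (hqd : ∀ η, q η η = 0)
    (hμ : ∀ η, 0 < μ η) (hμsum : ∑ η, μ η = 1)
    (hrev : ∀ η ζ, μ η * q η ζ = μ ζ * q ζ η)
    (hirr : ∀ η ζ, Relation.ReflTransGen (fun a b => 0 < q a b) η ζ)
    (hA : A.Nonempty) (hB : B.Nonempty) (hAB : Disjoint A B)
    -- `h` is the equilibrium potential between `A` and `B`:
    (hh1 : ∀ η ∈ A, h η = 1) (hh0 : ∀ η ∈ B, h η = 0)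
    (hharm : ∀ η, η ∉ A → η ∉ B → ∑ ζ, q η ζ * (h ζ - h η) = 0)
    -- `ψ` is a nontrivial flow:
    (hanti : ∀ η ζ, ψ η ζ = - ψ ζ η)
    (hcomp : ∀ η ζ, ψ η ζ ≠ 0 → 0 < q η ζ)
    (hnontriv : 0 < (1/2) * ∑ η, ∑ ζ,
        (if 0 < q η ζ then ψ η ζ ^ 2 / (μ η * q η ζ) else 0)) :
    (1/2) * ∑ η, ∑ ζ, μ η * q η ζ * (h ζ - h η)^2
      ≥ (∑ η, h η * (∑ ζ, ψ η ζ))^2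
        / ((1/2) * ∑ η, ∑ ζ, (if 0 < q η ζ then ψ η ζ ^ 2 / (μ η * q η ζ) else 0)) :=
  generalized_thomson_principle_general q μ ψ h hq0 hμ hanti hcomp
end

section
/- Condensation of the reversible inclusion process: under d_N·log N → 0, for each x ∈ S_⋆ the invariant probability of the configuration ξ_N^x with all N particles at x satisfies μ_N(ξ_N^x) → 1/|S_⋆| as N → ∞; consequently μ_N(H_N \ {ξ_N^x : x ∈ S_⋆}) → 0. -/
/-!
A configuration condensed at `x ∈ S_⋆` has weight `inclW d N ≥ d / N`, so it suffices to show
that the remaining configurations carry mass `o(d / N)`. For `1 ≤ n ≤ N` every single-site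
weight is at most `a / n` with `a = d exp (d H_N)`, `H_N` the harmonic number. Adding the sites
one at a time, configurations that split the mass `n` as `k + (n - k)` between the new site and
the old ones cost `∑ 1 / (k (n - k)) = 2 H_{n-1} / n`, so all configurations with two or more
occupied sites carry mass `O(H_N a² / N)`; those condensed at a non-maximal site carry
`inclW d N ∑_{x ∉ S_⋆} (m x / M)^N`. Relative to `inclW d N` this is `o(1)`, because
`d_N H_N ≤ d_N (1 + log N) → 0`.
-/

/-- The weight `w_N(n) = Γ(d_N+n)/(n!Γ(d_N))`, via the recursion
`w(0) = 1`, `w(n+1) = w(n)·(d+n)/(n+1)`. -/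
noncomputable def inclW (d : ℝ) : ℕ → ℝ
  | 0 => 1
  | n + 1 => inclW d n * (d + n) / (n + 1)

open Finset Filter Topology

lemma harmonic_nonneg (n : ℕ) : 0 ≤ harmonic n :=
  sum_nonneg fun _ _ => by positivity

lemma harmonic_mono : Monotone harmonic := fun _ _ h =>
  sum_le_sum_of_subset_of_nonneg (range_mono h) fun _ _ _ => by positivity

lemma tendsto_mul_harmonic_of_tendsto_mul_log {d : ℕ → ℝ} (hd : ∀ N, 0 ≤ d N)
    (h : Tendsto (fun N => d N * Real.log N) atTop (𝓝 0)) :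
    Tendsto (fun N => d N * harmonic N) atTop (𝓝 0) := by
  have hlog : Tendsto (fun N : ℕ => (Real.log N)⁻¹) atTop (𝓝 0) :=
    (Real.tendsto_log_atTop.comp tendsto_natCast_atTop_atTop).inv_tendsto_atTop
  have hd0 : Tendsto d atTop (𝓝 0) := by
    refine (zero_mul (0 : ℝ) ▸ h.mul hlog).congr' ?_
    filter_upwards [eventually_ge_atTop 2] with N hN
    have : Real.log N ≠ 0 := (Real.log_pos (by exact_mod_cast hN)).ne'
    field_simp
  refine squeeze_zero (fun N => mul_nonneg (hd N) (Rat.cast_nonneg.mpr (harmonic_nonneg N)))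
    (fun N => mul_le_mul_of_nonneg_left (harmonic_le_one_add_log N) (hd N)) ?_
  simpa [mul_add] using hd0.add h

lemma sum_Ico_one_div_mul_sub (n : ℕ) :
    ∑ k ∈ Ico 1 n, 1 / ((k : ℝ) * ((n - k : ℕ) : ℝ)) = 2 * harmonic (n - 1) / n := by
  have hsplit : ∀ k ∈ Ico 1 n,
      1 / ((k : ℝ) * ((n - k : ℕ) : ℝ)) = (1 / k + 1 / ((n - k : ℕ) : ℝ)) / n := by
    intro k hk
    obtain ⟨hk1, hkn⟩ := mem_Ico.mp hk
    have hk0 : (k : ℝ) ≠ 0 := by positivity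
    have hn0 : (n : ℝ) ≠ 0 := Nat.cast_ne_zero.mpr (by omega)
    have hnk : ((n - k : ℕ) : ℝ) ≠ 0 := by simp; omega
    rw [Nat.cast_sub hkn.le] at hnk ⊢
    field_simp
    ring
  have hharm : ∑ k ∈ Ico 1 n, 1 / (k : ℝ) = harmonic (n - 1) := by
    rcases n with _ | n
    · simp
    · simp [harmonic_eq_sum_Icc, Ico_add_one_right_eq_Icc]
  rw [sum_congr rfl hsplit, ← sum_div, sum_add_distrib,
    sum_Ico_reflect (fun k => 1 / (k : ℝ)) 1 (Nat.le_succ n)]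
  simp only [add_tsub_cancel_right, add_tsub_cancel_left, hharm]
  ring

lemma inclW_pos {d : ℝ} (hd : 0 < d) (n : ℕ) : 0 < inclW d n := by
  induction n with
  | zero => simp [inclW]
  | succ n ih => rw [inclW]; positivity

lemma div_le_inclW_succ {d : ℝ} (hd : 0 ≤ d) (n : ℕ) : d / (n + 1) ≤ inclW d (n + 1) := by
  induction n with
  | zero => simp [inclW]
  | succ n ih =>
    rw [inclW]
    push_cast at ih ⊢
    calc d / (n + 1 + 1) ≤ d / (n + 1) * (d + (n + 1)) / (n + 1 + 1) := by
          gcongr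
          rw [div_mul_eq_mul_div, le_div_iff₀ (by positivity)]
          nlinarith
      _ ≤ inclW d (n + 1) * (d + (n + 1)) / (n + 1 + 1) := by gcongr

lemma inclW_succ_le {d : ℝ} (hd : 0 ≤ d) (n : ℕ) :
    inclW d (n + 1) ≤ d / (n + 1) * Real.exp (d * harmonic n) := by
  induction n with
  | zero => simp [inclW]
  | succ n ih =>
    rw [inclW, harmonic_succ]
    push_cast at ih ⊢
    calc inclW d (n + 1) * (d + (n + 1)) / (n + 1 + 1)
        ≤ d / (n + 1) * Real.exp (d * harmonic n) * (d + (n + 1)) / (n + 1 + 1) := by gcongr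
      _ = d / (n + 1 + 1) * (Real.exp (d * harmonic n) * (d / (n + 1) + 1)) := by
          field_simp
      _ ≤ d / (n + 1 + 1) *
            (Real.exp (d * harmonic n) * Real.exp (d * ((n : ℝ) + 1)⁻¹)) := by
          gcongr
          rw [← div_eq_mul_inv]
          exact Real.add_one_le_exp _
      _ = d / (n + 1 + 1) * Real.exp (d * (harmonic n + ((n : ℝ) + 1)⁻¹)) := by
          rw [← Real.exp_add, mul_add]

lemma inclW_le_of_le {d : ℝ} (hd : 0 ≤ d) {n N : ℕ} (hn : 1 ≤ n) (hnN : n ≤ N) :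
    inclW d n ≤ d * Real.exp (d * harmonic N) / n := by
  obtain ⟨n, rfl⟩ := Nat.exists_eq_add_of_le' hn
  calc inclW d (n + 1) ≤ d / (n + 1) * Real.exp (d * harmonic n) := inclW_succ_le hd n
    _ ≤ d / (n + 1) * Real.exp (d * harmonic N) := by
        gcongr
        exact_mod_cast harmonic_mono (by omega)
    _ = _ := by push_cast; ring

noncomputable def partitionFunction {S : Type*} [DecidableEq S] (G : S → ℕ → ℝ)
    (T : Finset S) (n : ℕ) : ℝ :=
  ∑ η ∈ finsuppAntidiag T n, ∏ x ∈ T, G x (η x)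

section PartitionFunction

variable {S : Type*} [DecidableEq S] {G : S → ℕ → ℝ} {T : Finset S} {a : ℝ} {N : ℕ}

lemma partitionFunction_eq_coeff (G : S → ℕ → ℝ) (T : Finset S) (n : ℕ) :
    partitionFunction G T n = PowerSeries.coeff n (∏ x ∈ T, PowerSeries.mk (G x)) := by
  simp [partitionFunction, PowerSeries.coeff_prod]

lemma partitionFunction_insert {y : S} (hy : y ∉ T) (n : ℕ) :
    partitionFunction G (insert y T) n =
      ∑ p ∈ antidiagonal n, G y p.1 * partitionFunction G T p.2 := by
  simp [partitionFunction_eq_coeff, prod_insert hy, PowerSeries.coeff_mul]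

lemma partitionFunction_empty {n : ℕ} (hn : n ≠ 0) : partitionFunction G ∅ n = 0 := by
  simp [partitionFunction, hn]

lemma partitionFunction_zero (hG0 : ∀ x, G x 0 = 1) : partitionFunction G T 0 = 1 := by
  simp [partitionFunction, hG0]

lemma partitionFunction_nonneg (hG : ∀ x n, 0 ≤ G x n) (n : ℕ) :
    0 ≤ partitionFunction G T n :=
  sum_nonneg fun _ _ => prod_nonneg fun _ _ => hG _ _

lemma partitionFunction_insert_le (hG0 : ∀ x, G x 0 = 1) (hG : ∀ x n, 0 ≤ G x n)
    (hGle : ∀ x n, 1 ≤ n → n ≤ N → G x n ≤ a / n) (ha : 0 ≤ a) {y : S} (hy : y ∉ T)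
    {c : ℝ} (hc : 0 ≤ c) (hT : ∀ n, 1 ≤ n → n ≤ N → partitionFunction G T n ≤ c / n)
    {n : ℕ} (hn : 1 ≤ n) (hnN : n ≤ N) :
    partitionFunction G (insert y T) n ≤
      partitionFunction G T n + G y n + 2 * a * c * harmonic N / n := by
  have hmid : ∑ k ∈ Ico 1 n, G y k * partitionFunction G T (n - k) ≤
      2 * a * c * harmonic N / n :=
    calc ∑ k ∈ Ico 1 n, G y k * partitionFunction G T (n - k)
        ≤ ∑ k ∈ Ico 1 n, a / k * (c / ((n - k : ℕ) : ℝ)) := by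
          refine sum_le_sum fun k hk => ?_
          obtain ⟨hk1, hkn⟩ := mem_Ico.mp hk
          exact mul_le_mul (hGle y k hk1 (by omega)) (hT _ (by omega) (by omega))
            (partitionFunction_nonneg hG _) (by positivity)
      _ = a * c * (2 * harmonic (n - 1) / n) := by
          rw [← sum_Ico_one_div_mul_sub, mul_sum]
          refine sum_congr rfl fun k _ => ?_
          ring
      _ ≤ a * c * (2 * harmonic N / n) := by
          gcongr
          exact_mod_cast harmonic_mono (by omega)
      _ = 2 * a * c * harmonic N / n := by ring
  rw [partitionFunction_insert hy, Nat.sum_antidiagonal_eq_sum_range_succ_mk, range_eq_Ico,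
    sum_eq_sum_Ico_succ_bot (by omega), sum_Ico_succ_top hn]
  simp only [hG0, one_mul, Nat.sub_zero, Nat.sub_self, partitionFunction_zero hG0, mul_one]
  linarith

lemma partitionFunction_le (hG0 : ∀ x, G x 0 = 1) (hG : ∀ x n, 0 ≤ G x n)
    (hGle : ∀ x n, 1 ≤ n → n ≤ N → G x n ≤ a / n) (ha : 0 ≤ a) (T : Finset S)
    {n : ℕ} (hn : 1 ≤ n) (hnN : n ≤ N) :
    partitionFunction G T n ≤ #T * a * (1 + 2 * a * harmonic N) ^ #T / n := by
  have hB : 1 ≤ 1 + 2 * a * harmonic N := by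
    have : (0 : ℝ) ≤ harmonic N := Rat.cast_nonneg.mpr (harmonic_nonneg N)
    nlinarith
  induction T using Finset.induction_on generalizing n with
  | empty => simp [partitionFunction_empty (by omega : n ≠ 0)]
  | @insert y T hy ih =>
    set B := 1 + 2 * a * harmonic N
    have hc : 0 ≤ #T * a * B ^ #T :=
      mul_nonneg (by positivity) (pow_nonneg (zero_le_one.trans hB) _)
    refine (partitionFunction_insert_le hG0 hG hGle ha hy hc (fun j hj hjN => ih hj hjN)
      hn hnN).trans ?_
    rw [card_insert_of_notMem hy]
    have hBpow : 1 ≤ B ^ (#T + 1) := one_le_pow₀ hB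
    calc partitionFunction G T n + G y n + 2 * a * (#T * a * B ^ #T) * harmonic N / n
        ≤ #T * a * B ^ #T / n + a / n + 2 * a * (#T * a * B ^ #T) * harmonic N / n := by
          gcongr
          exacts [ih hn hnN, hGle y n hn hnN]
      _ = (#T * a * B ^ (#T + 1) + a) / n := by ring
      _ ≤ ((#T + 1 : ℕ) : ℝ) * a * B ^ (#T + 1) / n := by
          gcongr
          push_cast
          nlinarith

lemma partitionFunction_le_sum_add (hG0 : ∀ x, G x 0 = 1) (hG : ∀ x n, 0 ≤ G x n)
    (hGle : ∀ x n, 1 ≤ n → n ≤ N → G x n ≤ a / n) (ha : 0 ≤ a) (T : Finset S)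
    {n : ℕ} (hn : 1 ≤ n) (hnN : n ≤ N) :
    partitionFunction G T n ≤
      ∑ x ∈ T, G x n + 2 * harmonic N * a ^ 2 * #T ^ 2 * (1 + 2 * a * harmonic N) ^ #T / n := by
  have hH : (0 : ℝ) ≤ harmonic N := Rat.cast_nonneg.mpr (harmonic_nonneg N)
  have hB : 1 ≤ 1 + 2 * a * harmonic N := by nlinarith
  induction T using Finset.induction_on generalizing n with
  | empty => simp [partitionFunction_empty (by omega : n ≠ 0)]
  | @insert y T hy ih =>
    set B := 1 + 2 * a * harmonic N
    have hc : 0 ≤ #T * a * B ^ #T :=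
      mul_nonneg (by positivity) (pow_nonneg (zero_le_one.trans hB) _)
    refine (partitionFunction_insert_le hG0 hG hGle ha hy hc
      (fun j hj hjN => partitionFunction_le hG0 hG hGle ha T hj hjN) hn hnN).trans ?_
    rw [card_insert_of_notMem hy, sum_insert hy]
    calc partitionFunction G T n + G y n + 2 * a * (#T * a * B ^ #T) * harmonic N / n
        ≤ ∑ x ∈ T, G x n + 2 * harmonic N * a ^ 2 * #T ^ 2 * B ^ #T / n + G y n
            + 2 * a * (#T * a * B ^ #T) * harmonic N / n := by
          gcongr
          exact ih hn hnN
      _ = G y n + ∑ x ∈ T, G x n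
            + 2 * harmonic N * a ^ 2 * (#T ^ 2 + #T) * B ^ #T / n := by ring
      _ ≤ G y n + ∑ x ∈ T, G x n
            + 2 * harmonic N * a ^ 2 * ((#T + 1 : ℕ) : ℝ) ^ 2 * B ^ (#T + 1) / n := by
          gcongr
          · push_cast
            nlinarith
          · exact Nat.le_succ _

end PartitionFunction

lemma prod_single_apply {S : Type*} [Fintype S] {G : S → ℕ → ℝ} (hG0 : ∀ x, G x 0 = 1)
    (x : S) (N : ℕ) : ∏ z, G z (Finsupp.single x N z) = G x N := by
  rw [Fintype.prod_eq_single x fun z hz => by rw [Finsupp.single_eq_of_ne hz, hG0],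
    Finsupp.single_eq_same]

section Condensation

variable {S : Type*} [Fintype S] [DecidableEq S]

/-- The set `H_N \ {ξ_N^x : x ∈ T}` of the paper. -/
noncomputable def noncondensed (T : Finset S) (N : ℕ) : Finset (S →₀ ℕ) :=
  (finsuppAntidiag univ N).filter (fun η => ∀ x ∈ T, η ≠ Finsupp.single x N)

lemma sum_finsuppAntidiag_eq_sum_noncondensed_add {M : Type*} [AddCommMonoid M]
    (f : (S →₀ ℕ) → M) (T : Finset S) {N : ℕ} (hN : N ≠ 0) :
    ∑ η ∈ finsuppAntidiag univ N, f η =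
      ∑ η ∈ noncondensed T N, f η + ∑ x ∈ T, f (Finsupp.single x N) := by
  rw [noncondensed, ← sum_filter_add_sum_filter_not (finsuppAntidiag univ N)
    (fun η => ∀ x ∈ T, η ≠ Finsupp.single x N)]
  congr 1
  have himage :
      (finsuppAntidiag univ N).filter (fun η => ¬ ∀ x ∈ T, η ≠ Finsupp.single x N) =
        T.image (Finsupp.single · N) := by
    ext η
    simp only [mem_filter, mem_image, mem_finsuppAntidiag, not_forall, not_not]
    constructor
    · rintro ⟨-, x, hx, rfl⟩
      exact ⟨x, hx, rfl⟩
    · rintro ⟨x, hx, rfl⟩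
      exact ⟨⟨by simp, by simp⟩, x, hx, rfl⟩
  rw [himage, sum_image fun x _ y _ h => Finsupp.single_left_injective hN h]

lemma sum_noncondensed_le {G : S → ℕ → ℝ} {a : ℝ} {N : ℕ} (hG0 : ∀ x, G x 0 = 1)
    (hG : ∀ x n, 0 ≤ G x n) (hGle : ∀ x n, 1 ≤ n → n ≤ N → G x n ≤ a / n)
    (ha : 0 ≤ a) (T : Finset S) (hN : 1 ≤ N) :
    ∑ η ∈ noncondensed T N, ∏ x, G x (η x) ≤
      ∑ x ∈ univ \ T, G x N + 2 * harmonic N * a ^ 2 * Fintype.card S ^ 2 *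
        (1 + 2 * a * harmonic N) ^ Fintype.card S / N := by
  have h := partitionFunction_le_sum_add hG0 hG hGle ha univ hN le_rfl
  rw [partitionFunction, sum_finsuppAntidiag_eq_sum_noncondensed_add _ T (by omega),
    ← sum_sdiff (subset_univ T), card_univ] at h
  simp only [prod_single_apply hG0] at h
  linarith

/-- The error term of `sum_noncondensed_le` divided by `d`, as a function of `u = d * harmonic N`
(with `a = d * exp u`). -/
noncomputable def condensationError (s : ℕ) (u : ℝ) : ℝ :=
  2 * s ^ 2 * u * Real.exp u ^ 2 * (1 + 2 * Real.exp u * u) ^ s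

lemma tendsto_condensationError (s : ℕ) : Tendsto (condensationError s) (𝓝 0) (𝓝 0) := by
  have h : Continuous (condensationError s) := by unfold condensationError; fun_prop
  simpa [condensationError] using h.tendsto 0

lemma noncondensed_div_inclW_le {d : ℝ} (hd : 0 < d) {q : S → ℝ} (hq0 : ∀ x, 0 ≤ q x)
    (hq1 : ∀ x, q x ≤ 1) (T : Finset S) {N : ℕ} (hN : 1 ≤ N) :
    (∑ η ∈ noncondensed T N, ∏ x, inclW d (η x) * q x ^ η x) / inclW d N ≤
      ∑ x ∈ univ \ T, q x ^ N + condensationError (Fintype.card S) (d * harmonic N) := by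
  set a := d * Real.exp (d * harmonic N)
  have hGle : ∀ x n, 1 ≤ n → n ≤ N → inclW d n * q x ^ n ≤ a / n := fun x n hn hnN =>
    (mul_le_of_le_one_right (inclW_pos hd n).le (pow_le_one₀ (hq0 x) (hq1 x))).trans
      (inclW_le_of_le hd.le hn hnN)
  have h := sum_noncondensed_le (G := fun x n => inclW d n * q x ^ n) (by simp [inclW])
    (fun x n => mul_nonneg (inclW_pos hd n).le (pow_nonneg (hq0 x) n)) hGle (by positivity) T hN
  have hw : d / N ≤ inclW d N := by
    obtain ⟨k, rfl⟩ := Nat.exists_eq_add_of_le' hN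
    exact_mod_cast div_le_inclW_succ hd.le k
  have hw0 : 0 < inclW d N := inclW_pos hd N
  have hN0 : (0 : ℝ) < N := by exact_mod_cast hN
  have hH : (0 : ℝ) ≤ harmonic N := Rat.cast_nonneg.mpr (harmonic_nonneg N)
  set E := 2 * harmonic N * a ^ 2 * Fintype.card S ^ 2 * (1 + 2 * a * harmonic N) ^ Fintype.card S
  have hE : 0 ≤ E := by positivity
  rw [← mul_sum] at h
  calc _ ≤ (inclW d N * ∑ x ∈ univ \ T, q x ^ N + E / N) / inclW d N := by gcongr
    _ = ∑ x ∈ univ \ T, q x ^ N + E / (N * inclW d N) := by field_simp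
    _ ≤ ∑ x ∈ univ \ T, q x ^ N + E / d := by
        gcongr
        rwa [div_le_iff₀ hN0, mul_comm] at hw
    _ = _ := by
        simp only [E, a, condensationError]
        field_simp

lemma tendsto_noncondensed_div_inclW {d : ℕ → ℝ} (hd : ∀ N, 0 < d N)
    (hdlog : Tendsto (fun N => d N * Real.log N) atTop (𝓝 0)) {q : S → ℝ}
    (hq0 : ∀ x, 0 ≤ q x) (hq1 : ∀ x, q x ≤ 1) {T : Finset S} (hT : ∀ x ∉ T, q x < 1) :
    Tendsto (fun N =>
      (∑ η ∈ noncondensed T N, ∏ x, inclW (d N) (η x) * q x ^ η x) / inclW (d N) N)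
      atTop (𝓝 0) := by
  have hbound : Tendsto (fun N => ∑ x ∈ univ \ T, q x ^ N +
      condensationError (Fintype.card S) (d N * harmonic N)) atTop (𝓝 0) := by
    rw [← add_zero (0 : ℝ)]
    refine Tendsto.add ?_ ((tendsto_condensationError _).comp
      (tendsto_mul_harmonic_of_tendsto_mul_log (fun N => (hd N).le) hdlog))
    simpa using tendsto_finsetSum (univ \ T) fun x hx =>
      tendsto_pow_atTop_nhds_zero_of_lt_one (hq0 x) (hT x (mem_sdiff.mp hx).2)
  refine squeeze_zero' (Eventually.of_forall fun N => div_nonneg (sum_nonneg fun η _ =>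
    prod_nonneg fun x _ => mul_nonneg (inclW_pos (hd N) _).le (pow_nonneg (hq0 x) _))
    (inclW_pos (hd N) N).le) ?_ hbound
  filter_upwards [eventually_ge_atTop 1] with N hN
  exact noncondensed_div_inclW_le (hd N) hq0 hq1 T hN

end Condensation

lemma tendsto_div_add_mul_of_tendsto_div {α : Type*} {l : Filter α} {R w : α → ℝ} {k : ℝ}
    (hk : k ≠ 0) (hw : ∀ᶠ i in l, w i ≠ 0) (h : Tendsto (fun i => R i / w i) l (𝓝 0)) :
    Tendsto (fun i => w i / (R i + k * w i)) l (𝓝 (1 / k)) ∧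
      Tendsto (fun i => R i / (R i + k * w i)) l (𝓝 0) := by
  have hinv : Tendsto (fun i => 1 / (R i / w i + k)) l (𝓝 (1 / k)) := by
    simpa using (h.add_const k).inv₀ (by simpa using hk)
  have heq : ∀ᶠ i in l, 1 / (R i / w i + k) = w i / (R i + k * w i) := by
    filter_upwards [hw] with i hi
    rw [div_add' _ _ _ hi, one_div_div]
  refine ⟨hinv.congr' heq, ?_⟩
  refine (zero_mul (1 / k) ▸ h.mul (hinv.congr' heq)).congr' ?_
  filter_upwards [hw] with i hi
  rw [div_mul_div_cancel₀ hi]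

theorem inclusion_process_condensation_general
    {S : Type*} [Fintype S] [DecidableEq S]
    (m : S → ℝ) (M : ℝ) (hm : ∀ x, 0 < m x)
    (hM : IsGreatest (Set.range m) M)
    (d : ℕ → ℝ) (hd : ∀ N, 0 < d N)
    (hdlog : Filter.Tendsto (fun N => d N * Real.log N) Filter.atTop (nhds 0))
    (Z : ℕ → ℝ)
    (hZ : ∀ N, Z N = ∑ η ∈ Finset.finsuppAntidiag (Finset.univ : Finset S) N,
        ∏ x, inclW (d N) (η x) * (m x / M) ^ (η x))
    (μ : ℕ → (S →₀ ℕ) → ℝ)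
    (hμ : ∀ N η, μ N η = (∏ x, inclW (d N) (η x) * (m x / M) ^ (η x)) / Z N)
    (Sstar : Finset S) (hSstar : Sstar = Finset.univ.filter (fun x => m x = M)) :
    (∀ x ∈ Sstar, Filter.Tendsto (fun N => μ N (Finsupp.single x N))
        Filter.atTop (nhds (1 / (Sstar.card : ℝ)))) ∧
    Filter.Tendsto (fun N =>
        ∑ η ∈ (Finset.finsuppAntidiag (Finset.univ : Finset S) N).filter
          (fun η => ∀ x ∈ Sstar, η ≠ Finsupp.single x N), μ N η)
      Filter.atTop (nhds 0) := by
  obtain ⟨⟨x₀, hx₀⟩, hmM⟩ := hM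
  have hM0 : 0 < M := hx₀ ▸ hm x₀
  have hq1 : ∀ x, m x / M ≤ 1 := fun x => (div_le_one hM0).mpr (hmM ⟨x, rfl⟩)
  have hSq : ∀ x, x ∈ Sstar ↔ m x / M = 1 := by simp [hSstar, div_eq_one_iff_eq hM0.ne']
  have hsingle : ∀ N, ∀ x ∈ Sstar,
      ∏ z, inclW (d N) (Finsupp.single x N z) * (m z / M) ^ Finsupp.single x N z =
        inclW (d N) N := fun N x hx =>
    (prod_single_apply (G := fun z n => inclW (d N) n * (m z / M) ^ n) (by simp [inclW]) x N).trans
      (by simp [(hSq x).1 hx])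
  have hZsplit : ∀ N ≠ 0, Z N =
      ∑ η ∈ noncondensed Sstar N, ∏ x, inclW (d N) (η x) * (m x / M) ^ η x +
        #Sstar * inclW (d N) N := fun N hN => by
    rw [hZ N, sum_finsuppAntidiag_eq_sum_noncondensed_add _ Sstar hN,
      sum_congr rfl (hsingle N), sum_const, nsmul_eq_mul]
  obtain ⟨hcond, hrest⟩ := tendsto_div_add_mul_of_tendsto_div
    (Nat.cast_ne_zero.mpr (card_ne_zero.mpr ⟨x₀, (hSq x₀).2 (by simp [hx₀, hM0.ne'])⟩))
    (Eventually.of_forall fun N => (inclW_pos (hd N) N).ne')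
    (tendsto_noncondensed_div_inclW hd hdlog (fun x => (div_pos (hm x) hM0).le) hq1
      fun x hx => (hq1 x).lt_of_ne (mt (hSq x).2 hx))
  refine ⟨fun x hx => hcond.congr' ?_, hrest.congr' ?_⟩ <;>
    filter_upwards [eventually_ne_atTop 0] with N hN
  · rw [hμ, hsingle N x hx, hZsplit N hN]
  · rw [← hZsplit N hN, sum_div]
    exact sum_congr rfl fun η _ => (hμ N η).symm

/-- Condensation of the reversible inclusion process. Under `d_N·log N → 0`,
for each `x ∈ S_⋆` the invariant probability of the fully condensed configuration `ξ_N^x`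
tends to `1/|S_⋆|`; consequently the total mass of non-condensed configurations tends
to `0`. -/
theorem inclusion_process_condensation
    {S : Type*} [Fintype S] [DecidableEq S] [Nonempty S]
    (m : S → ℝ) (M : ℝ) (hm : ∀ x, 0 < m x) (hmsum : ∑ x, m x = 1)
    (hM : IsGreatest (Set.range m) M)
    (d : ℕ → ℝ) (hd : ∀ N, 0 < d N)
    (hdlog : Filter.Tendsto (fun N => d N * Real.log N) Filter.atTop (nhds 0))
    (Z : ℕ → ℝ)
    (hZ : ∀ N, Z N = ∑ η ∈ Finset.finsuppAntidiag (Finset.univ : Finset S) N,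
        ∏ x, inclW (d N) (η x) * (m x / M) ^ (η x))
    (μ : ℕ → (S →₀ ℕ) → ℝ)
    (hμ : ∀ N η, μ N η = (∏ x, inclW (d N) (η x) * (m x / M) ^ (η x)) / Z N)
    (Sstar : Finset S) (hSstar : Sstar = Finset.univ.filter (fun x => m x = M)) :
    (∀ x ∈ Sstar, Filter.Tendsto (fun N => μ N (Finsupp.single x N))
        Filter.atTop (nhds (1 / (Sstar.card : ℝ)))) ∧
    Filter.Tendsto (fun N =>
        ∑ η ∈ (Finset.finsuppAntidiag (Finset.univ : Finset S) N).filter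
          (fun η => ∀ x ∈ Sstar, η ≠ Finsupp.single x N), μ N η)
      Filter.atTop (nhds 0) :=
  inclusion_process_condensation_general m M hm hM d hd hdlog Z hZ μ hμ Sstar hSstar
end

section
/- Mean jump rate formula via capacities (reversible case): for a reversible Markov chain on a finite space with invariant measure μ and disjoint nonempty sets E_i, E_j contained in a set E = ∪_k E_k, the trace process rates satisfy μ(E_i)·r⋆(i,j) = (1/2)[Cap(E_i, E∖E_i) + Cap(E_j, E∖E_j) − Cap(E_i∪E_j, E∖(E_i∪E_j))], where r⋆(i,j) = (1/μ(E_i))·Σ_{η∈E_i} μ(η) Σ_{ζ∈E_j} q⋆(η,ζ) and q⋆ is the transition rate of the process traced on E. -/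
/-! The equilibrium potential `h` of `E_i ∪ E_j` relative to `E` is `h_i + h_j`, and `h_j` is the
sum of the hitting distributions `p(ζ, ·)`, `ζ ∈ E_j`: in each case both sides have the same
values on `E` and are harmonic off `E`, so they agree by the maximum principle. Polarization of
the Dirichlet form turns the combination of capacities into `-D(h_i, h_j) = ∑ μ h_i (L h_j)`,
which localizes to `E_i` by the boundary values of `h_i`; there `L p(ζ, ·) = q⋆(·, ζ)`. -/

open Finset

noncomputable section

variable {H : Type*} [Fintype H]

def generator (q : H → H → ℝ) : (H → ℝ) →ₗ[ℝ] H → ℝ where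
  toFun f η := ∑ ζ, q η ζ * (f ζ - f η)
  map_add' f g := by
    ext η
    simp only [Pi.add_apply, ← sum_add_distrib]
    exact sum_congr rfl fun ζ _ => by ring
  map_smul' c f := by
    ext η
    simp only [Pi.smul_apply, smul_eq_mul, RingHom.id_apply, mul_sum]
    exact sum_congr rfl fun ζ _ => by ring

theorem generator_apply (q : H → H → ℝ) (f : H → ℝ) (η : H) :
    generator q f η = ∑ ζ, q η ζ * (f ζ - f η) :=
  rfl

section MaximumPrinciple

variable {q : H → H → ℝ}

theorem eq_of_forall_le_of_generator_eq_zero (hq0 : ∀ η ζ, 0 ≤ q η ζ) {f : H → ℝ} {η ζ : H}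
    (hmax : ∀ ξ, f ξ ≤ f η) (hL : generator q f η = 0) (hq : 0 < q η ζ) : f ζ = f η := by
  have hterm : ∀ ξ ∈ univ, q η ξ * (f ξ - f η) ≤ 0 := fun ξ _ =>
    mul_nonpos_of_nonneg_of_nonpos (hq0 η ξ) (sub_nonpos.2 (hmax ξ))
  have hζ := (sum_eq_zero_iff_of_nonpos hterm).1 hL ζ (mem_univ ζ)
  linarith [(mul_eq_zero.1 hζ).resolve_left hq.ne']

theorem nonpos_of_generator_eq_zero (hq0 : ∀ η ζ, 0 ≤ q η ζ)
    (hirr : ∀ η ζ, Relation.ReflTransGen (fun a b => 0 < q a b) η ζ) {A : Finset H}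
    (hA : A.Nonempty) {f : H → ℝ}
    (hfA : ∀ η ∈ A, f η ≤ 0) (hL : ∀ η ∉ A, generator q f η = 0) (η : H) : f η ≤ 0 := by
  obtain ⟨ζ₀, hζ₀⟩ := hA
  have : Nonempty H := ⟨ζ₀⟩
  obtain ⟨η₀, hmax⟩ := Finite.exists_max f
  suffices ∀ a, Relation.ReflTransGen (fun a b => 0 < q a b) a ζ₀ → f a = f η₀ → f η₀ ≤ 0 from
    (hmax η).trans (this η₀ (hirr η₀ ζ₀) rfl)
  intro a hpath
  induction hpath using Relation.ReflTransGen.head_induction_on with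
  | refl => exact fun h => h ▸ hfA ζ₀ hζ₀
  | @head a b hab _ ih =>
    intro ha
    by_cases haA : a ∈ A
    · exact ha ▸ hfA a haA
    · exact ih <| (eq_of_forall_le_of_generator_eq_zero hq0 (ha ▸ hmax) (hL a haA) hab).trans ha

theorem eq_of_eqOn_of_generator_eq_zero (hq0 : ∀ η ζ, 0 ≤ q η ζ)
    (hirr : ∀ η ζ, Relation.ReflTransGen (fun a b => 0 < q a b) η ζ) {A : Finset H}
    (hA : A.Nonempty) {f g : H → ℝ}
    (hfg : ∀ η ∈ A, f η = g η) (hf : ∀ η ∉ A, generator q f η = 0)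
    (hg : ∀ η ∉ A, generator q g η = 0) : f = g := by
  have hL : ∀ u v : H → ℝ, (∀ η ∉ A, generator q u η = 0) → (∀ η ∉ A, generator q v η = 0) →
      ∀ η ∉ A, generator q (u - v) η = 0 := fun u v hu hv η hη => by
    rw [map_sub, Pi.sub_apply, hu η hη, hv η hη, sub_zero]
  ext η
  have hle := nonpos_of_generator_eq_zero hq0 hirr hA
    (fun ξ hξ => (sub_eq_zero.2 (hfg ξ hξ)).le) (hL f g hf hg) η
  have hge := nonpos_of_generator_eq_zero hq0 hirr hA
    (fun ξ hξ => (sub_eq_zero.2 (hfg ξ hξ).symm).le) (hL g f hg hf) η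
  exact le_antisymm (sub_nonpos.1 hle) (sub_nonpos.1 hge)

end MaximumPrinciple

section DirichletForm

variable (μ : H → ℝ) (q : H → H → ℝ)

def dirichletForm (f g : H → ℝ) : ℝ :=
  (1 / 2) * ∑ η, ∑ ζ, μ η * q η ζ * (f ζ - f η) * (g ζ - g η)

theorem dirichletForm_self (f : H → ℝ) :
    dirichletForm μ q f f = (1 / 2) * ∑ η, ∑ ζ, μ η * q η ζ * (f ζ - f η) ^ 2 := by
  simp only [dirichletForm, mul_assoc, sq]

theorem dirichletForm_add_add (f g : H → ℝ) :
    dirichletForm μ q (f + g) (f + g) =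
      dirichletForm μ q f f + dirichletForm μ q g g + 2 * dirichletForm μ q f g := by
  simp only [dirichletForm, Pi.add_apply, mul_sum, ← sum_add_distrib]
  exact sum_congr rfl fun η _ => sum_congr rfl fun ζ _ => by ring

theorem dirichletForm_eq_neg_sum_mul_generator (hrev : ∀ η ζ, μ η * q η ζ = μ ζ * q ζ η)
    (f g : H → ℝ) : dirichletForm μ q f g = -∑ η, μ η * f η * generator q g η := by
  -- summation by parts: reversibility lets us swap `η` and `ζ` in the `f ζ` half
  have hswap : ∑ η, ∑ ζ, μ η * q η ζ * f ζ * (g ζ - g η) =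
      ∑ η, ∑ ζ, μ η * q η ζ * f η * (g η - g ζ) := by
    rw [sum_comm]
    exact sum_congr rfl fun η _ => sum_congr rfl fun ζ _ => by rw [hrev]
  have hsplit : ∑ η, ∑ ζ, μ η * q η ζ * (f ζ - f η) * (g ζ - g η) =
      ∑ η, ∑ ζ, μ η * q η ζ * f ζ * (g ζ - g η) - ∑ η, ∑ ζ, μ η * q η ζ * f η * (g ζ - g η) := by
    simp only [← sum_sub_distrib]
    exact sum_congr rfl fun η _ => sum_congr rfl fun ζ _ => by ring
  rw [dirichletForm, hsplit, hswap]
  simp only [generator_apply, mul_sum, ← sum_sub_distrib, ← sum_neg_distrib]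
  exact sum_congr rfl fun η _ => sum_congr rfl fun ζ _ => by ring

end DirichletForm

section EquilibriumPotential

variable [DecidableEq H] {q : H → H → ℝ} {E : Finset H}

/-- `f` is the equilibrium potential `h_{A, E \ A}`. -/
def IsEquilibriumPotential (q : H → H → ℝ) (E A : Finset H) (f : H → ℝ) : Prop :=
  (∀ η ∈ A, f η = 1) ∧ (∀ η ∈ E \ A, f η = 0) ∧ ∀ η, η ∉ E → generator q f η = 0

namespace IsEquilibriumPotential

theorem empty : IsEquilibriumPotential q E ∅ 0 :=
  ⟨by simp, fun _ _ => rfl, fun η _ => by rw [map_zero, Pi.zero_apply]⟩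

theorem add {A B : Finset H} {f g : H → ℝ} (hf : IsEquilibriumPotential q E A f)
    (hg : IsEquilibriumPotential q E B g) (hAB : Disjoint A B) (hAE : A ⊆ E) (hBE : B ⊆ E) :
    IsEquilibriumPotential q E (A ∪ B) (f + g) := by
  obtain ⟨hf1, hf0, hfL⟩ := hf
  obtain ⟨hg1, hg0, hgL⟩ := hg
  refine ⟨fun η hη => ?_, fun η hη => ?_, fun η hη => ?_⟩
  · rcases mem_union.1 hη with hA | hB
    · rw [Pi.add_apply, hf1 η hA, hg0 η (mem_sdiff.2 ⟨hAE hA, disjoint_left.1 hAB hA⟩), add_zero]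
    · rw [Pi.add_apply, hg1 η hB, hf0 η (mem_sdiff.2 ⟨hBE hB, disjoint_right.1 hAB hB⟩),
        zero_add]
  · obtain ⟨hηE, hηAB⟩ := mem_sdiff.1 hη
    rw [Pi.add_apply, hf0 η (mem_sdiff.2 ⟨hηE, fun h => hηAB (mem_union_left B h)⟩),
      hg0 η (mem_sdiff.2 ⟨hηE, fun h => hηAB (mem_union_right A h)⟩), add_zero]
  · rw [map_add, Pi.add_apply, hfL η hη, hgL η hη, add_zero]

theorem sum_singleton {B : Finset H} {p : H → H → ℝ} (hBE : B ⊆ E)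
    (hp : ∀ ζ ∈ B, IsEquilibriumPotential q E {ζ} (p ζ)) :
    IsEquilibriumPotential q E B (∑ ζ ∈ B, p ζ) := by
  induction B using Finset.induction_on with
  | empty => simpa using empty
  | insert ζ B hζB ih =>
    rw [sum_insert hζB, insert_eq]
    exact (hp ζ (mem_insert_self ζ B)).add
      (ih ((subset_insert ζ B).trans hBE) fun ξ hξ => hp ξ (mem_insert_of_mem hξ))
      (disjoint_singleton_left.2 hζB) (singleton_subset_iff.2 (hBE (mem_insert_self ζ B)))
      ((subset_insert ζ B).trans hBE)

theorem unique {A : Finset H} {f g : H → ℝ} (hq0 : ∀ η ζ, 0 ≤ q η ζ)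
    (hirr : ∀ η ζ, Relation.ReflTransGen (fun a b => 0 < q a b) η ζ) (hE : E.Nonempty)
    (hf : IsEquilibriumPotential q E A f) (hg : IsEquilibriumPotential q E A g) : f = g := by
  refine eq_of_eqOn_of_generator_eq_zero hq0 hirr hE (fun η hη => ?_) hf.2.2 hg.2.2
  by_cases hA : η ∈ A
  · rw [hf.1 η hA, hg.1 η hA]
  · rw [hf.2.1 η (mem_sdiff.2 ⟨hη, hA⟩), hg.2.1 η (mem_sdiff.2 ⟨hη, hA⟩)]

theorem sum_mul_generator (μ : H → ℝ) {A : Finset H} {f g : H → ℝ}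
    (hf : IsEquilibriumPotential q E A f) (hg : ∀ η ∉ E, generator q g η = 0) :
    ∑ η, μ η * f η * generator q g η = ∑ η ∈ A, μ η * generator q g η := by
  rw [← Fintype.sum_ite_mem A]
  refine sum_congr rfl fun η _ => ?_
  split_ifs with hA
  · rw [hf.1 η hA, mul_one]
  · by_cases hE : η ∈ E
    · rw [hf.2.1 η (mem_sdiff.2 ⟨hE, hA⟩), mul_zero, zero_mul]
    · rw [hg η hE, mul_zero]

/-- For `f = p(ζ, ·)` this is the rate `q⋆(η, ζ)` of the chain traced on `E`. -/
theorem generator_apply_eq_add_sum_compl {ζ η : H} {f : H → ℝ}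
    (hf : IsEquilibriumPotential q E {ζ} f) (hζ : ζ ∈ E) (hη : η ∈ E) (hηζ : η ≠ ζ) :
    generator q f η = q η ζ + ∑ ξ ∈ univ \ E, q η ξ * f ξ := by
  have hfη : f η = 0 := hf.2.1 η (mem_sdiff.2 ⟨hη, notMem_singleton.2 hηζ⟩)
  have hsumE : ∑ ξ ∈ E, q η ξ * f ξ = q η ζ := by
    rw [sum_eq_single_of_mem ζ hζ fun ξ hξ hξζ => ?_, hf.1 ζ (mem_singleton_self ζ), mul_one]
    rw [hf.2.1 ξ (mem_sdiff.2 ⟨hξ, notMem_singleton.2 hξζ⟩), mul_zero]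
  rw [generator_apply, hfη, ← hsumE, add_comm, sum_sdiff (subset_univ E)]
  simp only [sub_zero]

end IsEquilibriumPotential

end EquilibriumPotential

end

theorem mean_jump_rate_via_capacities_general
    {H : Type*} [Fintype H] [DecidableEq H]
    (q : H → H → ℝ) (μ : H → ℝ)
    (hq0 : ∀ η ζ, 0 ≤ q η ζ)
    (hμ : ∀ η, 0 < μ η)
    (hrev : ∀ η ζ, μ η * q η ζ = μ ζ * q ζ η)
    (hirr : ∀ η ζ, Relation.ReflTransGen (fun a b => 0 < q a b) η ζ)
    (κ : ℕ) (E : Fin κ → Finset H)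
    (hEne : ∀ k, (E k).Nonempty)
    (hEdisj : ∀ k l, k ≠ l → Disjoint (E k) (E l))
    (i j : Fin κ) (hij : i ≠ j)
    (EU : Finset H) (hEU : EU = Finset.univ.biUnion E)
    -- `p ζ ξ` is the probability, starting from `ξ`, of hitting `EU` first at `ζ ∈ EU`:
    (p : H → H → ℝ)
    (hp1 : ∀ ζ ∈ EU, p ζ ζ = 1)
    (hp0 : ∀ ζ ∈ EU, ∀ ζ' ∈ EU, ζ' ≠ ζ → p ζ ζ' = 0)
    (hpharm : ∀ ζ ∈ EU, ∀ ξ, ξ ∉ EU → ∑ ξ', q ξ ξ' * (p ζ ξ' - p ζ ξ) = 0)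
    -- transition rates of the process traced on `EU`:
    (qstar : H → H → ℝ)
    (hqstar : ∀ η ∈ EU, ∀ ζ ∈ EU, η ≠ ζ →
      qstar η ζ = q η ζ + ∑ ξ ∈ Finset.univ \ EU, q η ξ * p ζ ξ)
    -- equilibrium potentials of the three capacitors:
    (h₁ h₂ h₃ : H → ℝ)
    (hh₁ : (∀ η ∈ E i, h₁ η = 1) ∧ (∀ η ∈ EU \ E i, h₁ η = 0) ∧
      ∀ η, η ∉ EU → ∑ ζ, q η ζ * (h₁ ζ - h₁ η) = 0)
    (hh₂ : (∀ η ∈ E j, h₂ η = 1) ∧ (∀ η ∈ EU \ E j, h₂ η = 0) ∧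
      ∀ η, η ∉ EU → ∑ ζ, q η ζ * (h₂ ζ - h₂ η) = 0)
    (hh₃ : (∀ η ∈ E i ∪ E j, h₃ η = 1) ∧ (∀ η ∈ EU \ (E i ∪ E j), h₃ η = 0) ∧
      ∀ η, η ∉ EU → ∑ ζ, q η ζ * (h₃ ζ - h₃ η) = 0)
    -- Dirichlet form:
    (D : (H → ℝ) → ℝ)
    (hD : ∀ f, D f = (1/2) * ∑ η, ∑ ζ, μ η * q η ζ * (f ζ - f η) ^ 2)
    -- mean jump rate of the trace process from `E i` to `E j`:
    (rstar : ℝ)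
    (hrstar : rstar = (1 / ∑ η ∈ E i, μ η) *
      ∑ η ∈ E i, μ η * ∑ ζ ∈ E j, qstar η ζ) :
    (∑ η ∈ E i, μ η) * rstar = (1/2) * (D h₁ + D h₂ - D h₃) := by
  have hEi : E i ⊆ EU := hEU ▸ subset_biUnion_of_mem E (mem_univ i)
  have hEj : E j ⊆ EU := hEU ▸ subset_biUnion_of_mem E (mem_univ j)
  have hp : ∀ ζ ∈ EU, IsEquilibriumPotential q EU {ζ} (p ζ) := fun ζ hζ =>
    ⟨by simpa using hp1 ζ hζ,
      fun ξ hξ => hp0 ζ hζ ξ (mem_sdiff.1 hξ).1 (notMem_singleton.1 (mem_sdiff.1 hξ).2),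
      hpharm ζ hζ⟩
  have hEU_ne : EU.Nonempty := (hEne i).mono hEi
  have h₃_eq : h₃ = h₁ + h₂ := IsEquilibriumPotential.unique hq0 hirr hEU_ne hh₃
    (IsEquilibriumPotential.add hh₁ hh₂ (hEdisj i j hij) hEi hEj)
  have h₂_eq : h₂ = ∑ ζ ∈ E j, p ζ := IsEquilibriumPotential.unique hq0 hirr hEU_ne hh₂
    (IsEquilibriumPotential.sum_singleton hEj fun ζ hζ => hp ζ (hEj hζ))
  have hcap : (1 / 2) * (D h₁ + D h₂ - D h₃) = ∑ η, μ η * h₁ η * generator q h₂ η := by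
    simp only [hD, ← dirichletForm_self]
    rw [h₃_eq, dirichletForm_add_add, dirichletForm_eq_neg_sum_mul_generator μ q hrev h₁ h₂]
    ring
  have hrate : ∀ η ∈ E i, generator q h₂ η = ∑ ζ ∈ E j, qstar η ζ := fun η hη => by
    rw [h₂_eq, map_sum, Finset.sum_apply]
    refine sum_congr rfl fun ζ hζ => ?_
    have hηζ : η ≠ ζ := fun h => disjoint_left.1 (hEdisj i j hij) hη (h ▸ hζ)
    rw [hqstar η (hEi hη) ζ (hEj hζ) hηζ,
      (hp ζ (hEj hζ)).generator_apply_eq_add_sum_compl (hEj hζ) (hEi hη) hηζ]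
  rw [hrstar, ← mul_assoc, mul_one_div_cancel (sum_pos (fun η _ => hμ η) (hEne i)).ne', one_mul,
    hcap, IsEquilibriumPotential.sum_mul_generator μ hh₁ hh₂.2.2]
  exact sum_congr rfl fun η hη => by rw [hrate η hη]

/-- Mean jump rate formula via capacities (reversible case). For a finite
irreducible reversible chain with invariant probability `μ` and a disjoint family of
nonempty sets `E_1,…,E_κ` with union `E`, the trace-process mean rates satisfy
`μ(E_i)·r⋆(i,j) = (1/2)[Cap(E_i, E∖E_i) + Cap(E_j, E∖E_j) − Cap(E_i∪E_j, E∖(E_i∪E_j))]`.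
The hitting distribution `p ζ ·` and the equilibrium potentials `h₁, h₂, h₃` are
characterized by their boundary values and harmonicity off the relevant sets; the trace
rates are `q⋆(η,ζ) = q(η,ζ) + Σ_{ξ∉E} q(η,ξ)·p ζ ξ`, and `Cap(A,B) = D(h_{A,B})`. -/
theorem mean_jump_rate_via_capacities
    {H : Type*} [Fintype H] [DecidableEq H]
    (q : H → H → ℝ) (μ : H → ℝ)
    (hq0 : ∀ η ζ, 0 ≤ q η ζ) (hqd : ∀ η, q η η = 0)
    (hμ : ∀ η, 0 < μ η) (hμ1 : ∑ η, μ η = 1)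
    (hrev : ∀ η ζ, μ η * q η ζ = μ ζ * q ζ η)
    (hirr : ∀ η ζ, Relation.ReflTransGen (fun a b => 0 < q a b) η ζ)
    (κ : ℕ) (E : Fin κ → Finset H)
    (hEne : ∀ k, (E k).Nonempty)
    (hEdisj : ∀ k l, k ≠ l → Disjoint (E k) (E l))
    (i j : Fin κ) (hij : i ≠ j)
    (EU : Finset H) (hEU : EU = Finset.univ.biUnion E)
    -- `p ζ ξ` is the probability, starting from `ξ`, of hitting `EU` first at `ζ ∈ EU`:
    (p : H → H → ℝ)
    (hp1 : ∀ ζ ∈ EU, p ζ ζ = 1)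
    (hp0 : ∀ ζ ∈ EU, ∀ ζ' ∈ EU, ζ' ≠ ζ → p ζ ζ' = 0)
    (hpharm : ∀ ζ ∈ EU, ∀ ξ, ξ ∉ EU → ∑ ξ', q ξ ξ' * (p ζ ξ' - p ζ ξ) = 0)
    -- transition rates of the process traced on `EU`:
    (qstar : H → H → ℝ)
    (hqstar : ∀ η ∈ EU, ∀ ζ ∈ EU, η ≠ ζ →
      qstar η ζ = q η ζ + ∑ ξ ∈ Finset.univ \ EU, q η ξ * p ζ ξ)
    -- equilibrium potentials of the three capacitors:
    (h₁ h₂ h₃ : H → ℝ)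
    (hh₁ : (∀ η ∈ E i, h₁ η = 1) ∧ (∀ η ∈ EU \ E i, h₁ η = 0) ∧
      ∀ η, η ∉ EU → ∑ ζ, q η ζ * (h₁ ζ - h₁ η) = 0)
    (hh₂ : (∀ η ∈ E j, h₂ η = 1) ∧ (∀ η ∈ EU \ E j, h₂ η = 0) ∧
      ∀ η, η ∉ EU → ∑ ζ, q η ζ * (h₂ ζ - h₂ η) = 0)
    (hh₃ : (∀ η ∈ E i ∪ E j, h₃ η = 1) ∧ (∀ η ∈ EU \ (E i ∪ E j), h₃ η = 0) ∧
      ∀ η, η ∉ EU → ∑ ζ, q η ζ * (h₃ ζ - h₃ η) = 0)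
    -- Dirichlet form:
    (D : (H → ℝ) → ℝ)
    (hD : ∀ f, D f = (1/2) * ∑ η, ∑ ζ, μ η * q η ζ * (f ζ - f η) ^ 2)
    -- mean jump rate of the trace process from `E i` to `E j`:
    (rstar : ℝ)
    (hrstar : rstar = (1 / ∑ η ∈ E i, μ η) *
      ∑ η ∈ E i, μ η * ∑ ζ ∈ E j, qstar η ζ) :
    (∑ η ∈ E i, μ η) * rstar = (1/2) * (D h₁ + D h₂ - D h₃) :=
  mean_jump_rate_via_capacities_general q μ hq0 hμ hrev hirr κ E hEne hEdisj i j hij EU hEU p hp1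
    hp0 hpharm qstar hqstar h₁ h₂ h₃ hh₁ hh₂ hh₃ D hD rstar hrstar
end
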